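/- Let e ∈ [0,1] and K ∈ ℕ. The probability that a Binomial(K, e) random variable exceeds K/2, i.e. ∑_{k > K/2} C(K,k) e^k (1-e)^{K-k}, is at most (4e(1-e))^{K/2} when e ≤ 1/2. -/

import Mathlib

/-!
Every term of the upper tail has `k ≥ K - k`, and trading a factor `e` for the larger `1 - e`
balances the exponents: `e ^ k (1 - e) ^ (K - k) ≤ (e (1 - e)) ^ (K / 2)`. Summing the binomial
coefficients over all `k` gives `2 ^ K = 4 ^ (K / 2)`.
-/

open Finset

lemma rpow_natCast_div_two_sq {x : ℝ} (hx : 0 ≤ x) (n : ℕ) : (x ^ ((n : ℝ) / 2)) ^ 2 = x ^ n := by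
  rw [← Real.rpow_mul_natCast hx, ← Real.rpow_natCast x n]
  norm_num

lemma pow_mul_pow_le_rpow_half {a b : ℝ} (ha : 0 ≤ a) (hab : a ≤ b) {i j : ℕ} (hji : j ≤ i) :
    a ^ i * b ^ j ≤ (a * b) ^ (((i + j : ℕ) : ℝ) / 2) := by
  have hb : 0 ≤ b := ha.trans hab
  have hsq : (a ^ i * b ^ j) ^ 2 ≤ (a * b) ^ (i + j) := by
    obtain ⟨d, rfl⟩ := Nat.exists_eq_add_of_le hji
    calc (a ^ (j + d) * b ^ j) ^ 2 = (a * b) ^ (j + j) * a ^ d * a ^ d := by ring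
      _ ≤ (a * b) ^ (j + j) * a ^ d * b ^ d := by gcongr
      _ = (a * b) ^ (j + d + j) := by ring
  rw [← pow_le_pow_iff_left₀ (by positivity) (by positivity) two_ne_zero,
    rpow_natCast_div_two_sq (mul_nonneg ha hb)]
  exact hsq

lemma four_mul_rpow_natCast_div_two {x : ℝ} (hx : 0 ≤ x) (n : ℕ) :
    (4 * x) ^ ((n : ℝ) / 2) = 2 ^ n * x ^ ((n : ℝ) / 2) := by
  rw [Real.mul_rpow (by norm_num) hx, show (4 : ℝ) = 2 ^ (2 : ℝ) by norm_num,
    ← Real.rpow_mul (by norm_num), ← Real.rpow_natCast]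
  ring_nf

lemma pow_mul_one_sub_pow_le_of_half_lt {e : ℝ} (he0 : 0 ≤ e) (he : e ≤ 1 / 2) {K k : ℕ}
    (hkK : k ≤ K) (hk : (K : ℝ) / 2 < k) :
    e ^ k * (1 - e) ^ (K - k) ≤ (e * (1 - e)) ^ ((K : ℝ) / 2) := by
  have hKk : K - k ≤ k := by
    have : K < 2 * k := by exact_mod_cast (by linarith : (K : ℝ) < 2 * k)
    omega
  have h := pow_mul_pow_le_rpow_half (b := 1 - e) he0 (by linarith) hKk
  rwa [Nat.add_sub_of_le hkK] at h

/-- Chernoff-type bound on the upper binomial tail: for `e ≤ 1/2`,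
`∑_{k > K/2} C(K,k) e^k (1-e)^{K-k} ≤ (4 e (1-e))^(K/2)`. -/
theorem stmt_10 (K : ℕ) (e : ℝ) (he0 : 0 ≤ e) (he : e ≤ 1 / 2) :
    (∑ k ∈ (Finset.range (K + 1)).filter (fun k : ℕ => (K : ℝ) / 2 < (k : ℝ)),
        (K.choose k : ℝ) * e ^ k * (1 - e) ^ (K - k))
      ≤ (4 * e * (1 - e)) ^ ((K : ℝ) / 2) := by
  have he1 : 0 ≤ e * (1 - e) := mul_nonneg he0 (by linarith)
  set p := (e * (1 - e)) ^ ((K : ℝ) / 2)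
  have hp : 0 ≤ p := Real.rpow_nonneg he1 _
  have hterm : ∀ k ∈ (range (K + 1)).filter (fun k : ℕ => (K : ℝ) / 2 < (k : ℝ)),
      (K.choose k : ℝ) * e ^ k * (1 - e) ^ (K - k) ≤ K.choose k * p := by
    intro k hk
    obtain ⟨hkK, hk⟩ := mem_filter.mp hk
    rw [mul_assoc]
    gcongr
    exact pow_mul_one_sub_pow_le_of_half_lt he0 he (Nat.lt_succ_iff.mp (mem_range.mp hkK)) hk
  calc _ ≤ ∑ k ∈ (range (K + 1)).filter (fun k : ℕ => (K : ℝ) / 2 < (k : ℝ)),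
          (K.choose k : ℝ) * p := sum_le_sum hterm
    _ ≤ ∑ k ∈ range (K + 1), (K.choose k : ℝ) * p :=
        sum_le_sum_of_subset_of_nonneg (filter_subset _ _) fun _ _ _ =>
          mul_nonneg (Nat.cast_nonneg _) hp
    _ = 2 ^ K * p := by
        rw [← sum_mul, ← Nat.cast_sum, Nat.sum_range_choose, Nat.cast_pow, Nat.cast_ofNat]
    _ = (4 * e * (1 - e)) ^ ((K : ℝ) / 2) := by
        rw [mul_assoc, four_mul_rpow_natCast_div_two he1]
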